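/- arXiv:1108.0082 — 2 statements merged into one kernel-verified Lean document; each statement's English description precedes it below -/
import Mathlib

section
/- Fix real constants A, B with A > 0 and A·B > 1. For (x, z) ∈ ℝ² define the symmetric 3×3 real matrix G(x, z) = [[A·e^z, 1, 0], [1, x² + B·e^{−z}, x], [0, x, 1]]. Then G(x, z) is positive definite for every (x, z) ∈ ℝ². Hence G defines a Riemannian metric on ℝ³ (constant in the y-coordinate). -/
/-!
Completing the square twice writes `G = Lᴴ D L` with `L` of determinant one and
`D = diag (a, b - c² / a, 1)`, where `a = A·e^z`, `c = 1`, `b = B·e^{-z}`. Positive definiteness is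
invariant under such a congruence, so `G` is positive definite exactly when `a > 0` and `c² < a b`;
for Krouglov's metric `a b = A B` does not depend on `z`.
-/

open Real Matrix

/-- Krouglov's candidate compatible metric on `ℝ³`:
`G(x, z) = [[A·e^z, 1, 0], [1, x² + B·e^{-z}, x], [0, x, 1]]`. -/
noncomputable def krouglovMetric (A B x z : ℝ) : Matrix (Fin 3) (Fin 3) ℝ :=
  !![A * exp z, 1, 0;
     1, x ^ 2 + B * exp (-z), x;
     0, x, 1]

theorem tridiag_eq_star_mul_diagonal_mul {a b c x : ℝ} (ha : a ≠ 0) :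
    !![a, c, 0; c, x ^ 2 + b, x; 0, x, 1] =
      star !![1, c / a, 0; 0, 1, 0; 0, x, 1] * diagonal ![a, b - c ^ 2 / a, 1] *
        !![1, c / a, 0; 0, 1, 0; 0, x, 1] := by
  ext i j
  fin_cases i <;> fin_cases j <;>
    simp [star_eq_conjTranspose, conjTranspose, mul_apply, Fin.sum_univ_three] <;>
    grind

theorem tridiag_posDef_iff {a b c x : ℝ} :
    (!![a, c, 0; c, x ^ 2 + b, x; 0, x, 1] : Matrix (Fin 3) (Fin 3) ℝ).PosDef ↔
      0 < a ∧ c ^ 2 < a * b := by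
  have hL : IsUnit !![1, c / a, 0; 0, 1, 0; 0, x, 1] :=
    (isUnit_iff_isUnit_det _).2 (by simp [det_fin_three])
  refine ⟨fun h ↦ ?_, fun ⟨ha, hcab⟩ ↦ ?_⟩
  · have ha : 0 < a := by simpa using h.diag_pos (i := 0)
    rw [tridiag_eq_star_mul_diagonal_mul ha.ne', hL.posDef_star_left_conjugate_iff,
      posDef_diagonal_iff] at h
    exact ⟨ha, (div_lt_iff₀' ha).1 (sub_pos.1 (h 1))⟩
  · rw [tridiag_eq_star_mul_diagonal_mul ha.ne', hL.posDef_star_left_conjugate_iff,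
      posDef_diagonal_iff]
    intro i
    fin_cases i
    exacts [ha, sub_pos.2 ((div_lt_iff₀' ha).2 hcab), one_pos]

/-- For `A > 0` and `A·B > 1`, the matrix `G(x, z)` is positive
definite for every `(x, z) ∈ ℝ²`; hence `G` defines a Riemannian metric on `ℝ³`. -/
theorem krouglovMetric_posDef (A B : ℝ) (hA : 0 < A) (hAB : 1 < A * B) :
    ∀ x z : ℝ, (krouglovMetric A B x z).PosDef := by
  intro x z
  refine tridiag_posDef_iff.2 ⟨mul_pos hA (exp_pos z), ?_⟩
  calc (1 : ℝ) ^ 2 < A * B := by rwa [one_pow]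
    _ = A * exp z * (B * exp (-z)) := by rw [exp_neg]; field_simp
end

section
/- Fix real constants A, B with A > 0 and 1 < A·B < 3. For (x, z) ∈ ℝ² define the symmetric 3×3 matrix M(x, z) with entries M₁₁ = (A·B − 3 − 2x²·A·e^z)/(4(A·B − 1)), M₁₂ = M₂₁ = −(x/2)·√(A·e^z/(A·B − 1)), M₁₃ = M₃₁ = (x/2)·√(A·e^z)/(A·B − 1), M₂₂ = −1/4, M₂₃ = M₃₂ = 0, M₃₃ = −1/4. Then there exists ε > 0 such that M(x, z) is negative definite whenever |x| < ε and |z| < ε. (This is the key computation in the local counterexample to Blair's conjecture: the curvature matrix of the compatible metric is negative definite in a neighborhood of the origin, so the metric has strictly negative sectional curvature there.) -/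
open Real Matrix

/-- A symmetric real matrix is negative definite iff `vᵀ M v < 0` for all nonzero `v`. -/
def Matrix.NegDefR {n : Type*} [Fintype n] (M : Matrix n n ℝ) : Prop :=
  M.IsSymm ∧ ∀ v : n → ℝ, v ≠ 0 → v ⬝ᵥ (M *ᵥ v) < 0

/-- The matrix of the curvature tensor of Krouglov's compatible metric, with respect to
the orthonormal bivector basis. -/
noncomputable def krouglovCurvature (A B x z : ℝ) : Matrix (Fin 3) (Fin 3) ℝ :=
  !![(A * B - 3 - 2 * x ^ 2 * A * exp z) / (4 * (A * B - 1)),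
       -(x / 2) * Real.sqrt (A * exp z / (A * B - 1)),
       (x / 2) * Real.sqrt (A * exp z) / (A * B - 1);
     -(x / 2) * Real.sqrt (A * exp z / (A * B - 1)), -(1 / 4), 0;
     (x / 2) * Real.sqrt (A * exp z) / (A * B - 1), 0, -(1 / 4)]

set_option maxHeartbeats 1000000 in
/-- For `A > 0` and `1 < A·B < 3`, there exists `ε > 0` such that the
curvature matrix `M(x, z)` is negative definite whenever `|x| < ε` and `|z| < ε`: the
compatible metric of Krouglov's local counterexample to Blair's conjecture has strictly
negative sectional curvature in a neighborhood of the origin. -/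
theorem krouglov_curvature_negDef_near_origin (A B : ℝ) (hA : 0 < A)
    (hAB₁ : 1 < A * B) (hAB₃ : A * B < 3) :
    ∃ ε > 0, ∀ x z : ℝ, |x| < ε → |z| < ε → (krouglovCurvature A B x z).NegDefR := by
  have hAB1 : 0 < A * B - 1 := by linarith
  set c : ℝ := (3 - A * B) / (4 * (A * B - 1)) with hc_def
  have hc : 0 < c := by apply div_pos <;> linarith
  set K1 : ℝ := Real.sqrt (A * Real.exp 1 / (A * B - 1)) with hK1_def
  set K2 : ℝ := Real.sqrt (A * Real.exp 1) / (A * B - 1) with hK2_def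
  have hK1 : 0 ≤ K1 := Real.sqrt_nonneg _
  have hK2 : 0 ≤ K2 := by positivity
  set m : ℝ := min c (1 / 4) with hm_def
  have hm : 0 < m := lt_min hc (by norm_num)
  have hmc : m ≤ c := min_le_left _ _
  have hm14 : m ≤ 1 / 4 := min_le_right _ _
  refine ⟨min 1 (m / (2 * (K1 + K2 + 1))), lt_min one_pos (by positivity), ?_⟩
  intro x z hx hz
  have hx1 : |x| < 1 := lt_of_lt_of_le hx (min_le_left _ _)
  have hz1 : |z| < 1 := lt_of_lt_of_le hz (min_le_left _ _)
  have hxm : |x| ≤ m / (2 * (K1 + K2 + 1)) :=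
    le_of_lt (lt_of_lt_of_le hx (min_le_right _ _))
  have hxK : |x| * (K1 + K2 + 1) ≤ m / 2 := by
    rw [le_div_iff₀ (by positivity)] at hxm
    nlinarith
  have hez : Real.exp z ≤ Real.exp 1 :=
    Real.exp_le_exp.mpr (by linarith [(abs_le.mp (le_of_lt hz1)).2])
  have hez0 : 0 < Real.exp z := Real.exp_pos z
  have hs1 : Real.sqrt (A * Real.exp z / (A * B - 1)) ≤ K1 := by
    apply Real.sqrt_le_sqrt
    exact (div_le_div_iff_of_pos_right hAB1).mpr (by nlinarith)
  have hs1n : 0 ≤ Real.sqrt (A * Real.exp z / (A * B - 1)) := Real.sqrt_nonneg _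
  have hs2 : Real.sqrt (A * Real.exp z) ≤ Real.sqrt (A * Real.exp 1) := by
    apply Real.sqrt_le_sqrt; nlinarith
  have hs2n : 0 ≤ Real.sqrt (A * Real.exp z) := Real.sqrt_nonneg _
  set a : ℝ := -(x / 2) * Real.sqrt (A * Real.exp z / (A * B - 1)) with ha_def
  set b : ℝ := (x / 2) * Real.sqrt (A * Real.exp z) / (A * B - 1) with hb_def
  have ha : |a| ≤ m / 4 := by
    have : |a| = |x| / 2 * Real.sqrt (A * Real.exp z / (A * B - 1)) := by
      rw [ha_def, abs_mul, abs_neg, abs_div, abs_of_nonneg hs1n]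
      norm_num
    rw [this]
    nlinarith [mul_le_mul_of_nonneg_left hs1 (abs_nonneg x), abs_nonneg x]
  have hb : |b| ≤ m / 4 := by
    have : |b| = |x| / 2 * Real.sqrt (A * Real.exp z) / (A * B - 1) := by
      rw [hb_def, abs_div, abs_mul, abs_div, abs_of_nonneg hs2n,
        abs_of_pos hAB1]
      norm_num
    rw [this]
    have h2 : |x| / 2 * Real.sqrt (A * Real.exp z) / (A * B - 1)
        ≤ |x| / 2 * Real.sqrt (A * Real.exp 1) / (A * B - 1) := by
      apply (div_le_div_iff_of_pos_right hAB1).mpr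
      nlinarith [abs_nonneg x]
    have h3 : |x| / 2 * Real.sqrt (A * Real.exp 1) / (A * B - 1) = |x| / 2 * K2 := by
      rw [hK2_def]; ring
    have h4 : |x| / 2 * K2 ≤ m / 4 := by
      nlinarith [mul_nonneg (abs_nonneg x) hK1, abs_nonneg x]
    linarith
  have haL := (abs_le.mp ha).1
  have haR := (abs_le.mp ha).2
  have hbL := (abs_le.mp hb).1
  have hbR := (abs_le.mp hb).2
  have hM11 : (A * B - 3 - 2 * x ^ 2 * A * Real.exp z) / (4 * (A * B - 1)) ≤ -c := by
    rw [show -c = (A * B - 3) / (4 * (A * B - 1)) from by rw [hc_def]; ring]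
    apply (div_le_div_iff_of_pos_right (by linarith)).mpr
    nlinarith [mul_nonneg (mul_nonneg (sq_nonneg x) hA.le) hez0.le]
  constructor
  · unfold Matrix.IsSymm krouglovCurvature
    ext i j
    fin_cases i <;> fin_cases j <;> rfl
  · intro v hv
    have hvpos : 0 < (v 0) ^ 2 + (v 1) ^ 2 + (v 2) ^ 2 := by
      rcases Function.ne_iff.mp hv with ⟨i, hi⟩
      rw [Pi.zero_apply] at hi
      fin_cases i <;> simp at hi <;> positivity
    have expand : v ⬝ᵥ (krouglovCurvature A B x z *ᵥ v) =
        ((A * B - 3 - 2 * x ^ 2 * A * Real.exp z) / (4 * (A * B - 1))) * (v 0) ^ 2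
          + 2 * a * (v 0) * (v 1) + 2 * b * (v 0) * (v 2)
          - (1 / 4) * (v 1) ^ 2 - (1 / 4) * (v 2) ^ 2 := by
      simp [krouglovCurvature, Matrix.mulVec, dotProduct, Fin.sum_univ_three,
        ha_def, hb_def]
      ring
    rw [expand]
    have e1 : 2 * a * (v 0) * (v 1) ≤ m / 4 * ((v 0) ^ 2 + (v 1) ^ 2) := by
      nlinarith [mul_nonneg (by linarith : (0:ℝ) ≤ m / 4 - a) (sq_nonneg (v 0 + v 1)),
        mul_nonneg (by linarith : (0:ℝ) ≤ m / 4 + a) (sq_nonneg (v 0 - v 1))]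
    have e2 : 2 * b * (v 0) * (v 2) ≤ m / 4 * ((v 0) ^ 2 + (v 2) ^ 2) := by
      nlinarith [mul_nonneg (by linarith : (0:ℝ) ≤ m / 4 - b) (sq_nonneg (v 0 + v 2)),
        mul_nonneg (by linarith : (0:ℝ) ≤ m / 4 + b) (sq_nonneg (v 0 - v 2))]
    have e3 : (A * B - 3 - 2 * x ^ 2 * A * Real.exp z) / (4 * (A * B - 1)) * (v 0) ^ 2
        ≤ -c * (v 0) ^ 2 := mul_le_mul_of_nonneg_right hM11 (sq_nonneg (v 0))
    have e4 : m * (v 0) ^ 2 ≤ c * (v 0) ^ 2 := mul_le_mul_of_nonneg_right hmc (sq_nonneg (v 0))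
    have e5 : m * (v 1) ^ 2 ≤ 1 / 4 * (v 1) ^ 2 := mul_le_mul_of_nonneg_right hm14 (sq_nonneg (v 1))
    have e6 : m * (v 2) ^ 2 ≤ 1 / 4 * (v 2) ^ 2 := mul_le_mul_of_nonneg_right hm14 (sq_nonneg (v 2))
    have e7 : 0 < m * (v 0) ^ 2 + m * (v 1) ^ 2 + m * (v 2) ^ 2 := by
      nlinarith [mul_pos hm hvpos]
    have e8 : 0 ≤ m * (v 0) ^ 2 := mul_nonneg hm.le (sq_nonneg (v 0))
    have e9 : 0 ≤ m * (v 1) ^ 2 := mul_nonneg hm.le (sq_nonneg (v 1))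
    have e10 : 0 ≤ m * (v 2) ^ 2 := mul_nonneg hm.le (sq_nonneg (v 2))
    linarith [e1, e2, e3, e4, e5, e6, e7, e8, e9, e10]
end
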